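/- arXiv:1406.6083 — 2 statements merged into one kernel-verified Lean document; each statement's English description precedes it below -/
import Mathlib

section
/- Let k be a field with char(k) ∉ {2, 3}, n ≥ 4, and work in S = k[x,y]/(x^n, x^{n-1}y, y^2 - x^3). If α = Σ_{i=0}^{n-1} a_i x^i + Σ_{i=0}^{n-2} b_i x^i y and β = Σ_{i=0}^{n-1} c_i x^i + Σ_{i=0}^{n-2} d_i x^i y are elements of S (with coefficients in a reduced commutative k-algebra A) satisfying α^n = 0, α^{n-1}β = 0, and β^2 = α^3, then a_0 = 0 and c_0 = 0. -/
/-!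
Reading off the constant coefficient, `x, y ↦ 0`, kills the defining relations, so it
descends to a ring homomorphism `S ⊗_k A → A` sending `α ↦ a₀` and `β ↦ c₀`. Now `α` is
nilpotent, and so is `β` because `β ^ 2 = α ^ 3`; their images in the reduced ring `A`
therefore vanish.
-/

open MvPolynomial

theorem isNilpotent_of_pow_eq_pow {S : Type*} [MonoidWithZero S] {α β : S} {m k : ℕ}
    (hα : IsNilpotent α) (hk : k ≠ 0) (h : β ^ m = α ^ k) : IsNilpotent β :=
  IsNilpotent.of_pow (h ▸ hα.pow_of_pos hk)

theorem constantCoeff_sum_C_mul_X_pow_add_sum_C_mul_X_pow_mul_X {σ R : Type*}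
    [CommSemiring R] (i j : σ) {m : ℕ} (hm : 0 < m) (u : Fin m → R) (v : Fin (m - 1) → R) :
    constantCoeff (∑ k : Fin m, C (u k) * X i ^ (k : ℕ)
      + ∑ k : Fin (m - 1), C (v k) * X i ^ (k : ℕ) * X j) = u ⟨0, hm⟩ := by
  simp only [map_add, map_sum, map_mul, map_pow, constantCoeff_C, constantCoeff_X, mul_zero,
    Finset.sum_const_zero, add_zero]
  rw [Finset.sum_eq_single ⟨0, hm⟩ (fun k _ hk => by simp [Fin.val_ne_of_ne hk]) (by simp)]
  simp

theorem stmt4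
    (A : Type*) [CommRing A] [IsReduced A]
    (n : ℕ) (hn : 4 ≤ n)
    (a c : Fin n → A) (b d : Fin (n - 1) → A) :
    let x : MvPolynomial (Fin 2) A := MvPolynomial.X 0
    let y : MvPolynomial (Fin 2) A := MvPolynomial.X 1
    let I : Ideal (MvPolynomial (Fin 2) A) :=
      Ideal.span {x ^ n, x ^ (n - 1) * y, y ^ 2 - x ^ 3}
    let α := Ideal.Quotient.mk I (∑ i : Fin n, MvPolynomial.C (a i) * x ^ (i : ℕ)
      + ∑ i : Fin (n - 1), MvPolynomial.C (b i) * x ^ (i : ℕ) * y)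
    let β := Ideal.Quotient.mk I (∑ i : Fin n, MvPolynomial.C (c i) * x ^ (i : ℕ)
      + ∑ i : Fin (n - 1), MvPolynomial.C (d i) * x ^ (i : ℕ) * y)
    α ^ n = 0 → α ^ (n - 1) * β = 0 → β ^ 2 = α ^ 3 →
      a ⟨0, by omega⟩ = 0 ∧ c ⟨0, by omega⟩ = 0 := by
  intro x y I α β hα _ hβ
  have hI : I ≤ RingHom.ker constantCoeff := by
    rw [Ideal.span_le]
    rintro p (rfl | rfl | rfl) <;>
      simp [x, y, zero_pow (show n ≠ 0 by omega), zero_pow (show n - 1 ≠ 0 by omega)]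
  let φ := Ideal.Quotient.lift I constantCoeff fun p hp => hI hp
  have hφ (u : Fin n → A) (v : Fin (n - 1) → A) :
      φ (Ideal.Quotient.mk I (∑ i : Fin n, C (u i) * x ^ (i : ℕ)
        + ∑ i : Fin (n - 1), C (v i) * x ^ (i : ℕ) * y)) = u ⟨0, by omega⟩ :=
    constantCoeff_sum_C_mul_X_pow_add_sum_C_mul_X_pow_mul_X 0 1 _ u v
  have hα_nil : IsNilpotent α := ⟨n, hα⟩
  have hβ_nil : IsNilpotent β := isNilpotent_of_pow_eq_pow hα_nil three_ne_zero hβ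
  exact ⟨hφ a b ▸ (hα_nil.map φ).eq_zero, hφ c d ▸ (hβ_nil.map φ).eq_zero⟩
end

section
/- In the polynomial ring k[x,y] over a field k, for every n ≥ 2 one has the equality of ideals (x,y)^n + (y^2 - x^3) = (x^n, x^{n-1}y, y^2 - x^3). -/
/-!
If `x ^ 2 ∣ y ^ 2` then `x ^ m * y ^ 2` is a multiple of `x ^ (m + 2)`, so by induction on `n` the
ideal `(x, y) ^ n` is generated by `x ^ n` and `x ^ (n - 1) * y` alone. The images of `x` and `y` in
`k[x,y] ⧸ (y ^ 2 - x ^ 3)` satisfy `x ^ 2 ∣ y ^ 2`, and both sides of the identity contain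
`y ^ 2 - x ^ 3`, so it suffices to compare their images in that quotient.
-/

namespace Ideal

variable {R : Type*} [CommRing R] {x y : R}

theorem span_pair_pow_succ_of_sq_dvd_sq (h : x ^ 2 ∣ y ^ 2) (n : ℕ) :
    span {x, y} ^ (n + 1) = span {x ^ (n + 1), x ^ n * y} := by
  induction n with
  | zero => simp
  | succ n ih =>
    obtain ⟨c, hc⟩ := h
    have hyy : x ^ n * y * y = c * x ^ (n + 2) := by
      linear_combination x ^ n * hc
    rw [pow_succ, ih, span_pair_mul_span_pair]
    apply le_antisymm
    · rw [span_le]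
      simp only [Set.insert_subset_iff, Set.singleton_subset_iff, SetLike.mem_coe]
      refine ⟨subset_span ?_, subset_span ?_, subset_span ?_, ?_⟩
      · simp [pow_succ]
      · simp
      · simp [pow_succ, mul_right_comm]
      · rw [hyy]
        exact mul_mem_left _ _ (subset_span (by simp))
    · rw [span_le]
      simp only [Set.insert_subset_iff, Set.singleton_subset_iff, SetLike.mem_coe]
      exact ⟨subset_span (by simp [pow_succ]), subset_span (by simp)⟩

theorem span_pair_pow_of_sq_dvd_sq (h : x ^ 2 ∣ y ^ 2) (n : ℕ) :
    span {x, y} ^ n = span {x ^ n, x ^ (n - 1) * y} := by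
  cases n with
  | zero =>
    rw [pow_zero, pow_zero, one_eq_top, eq_comm, eq_top_iff_one]
    exact subset_span (Set.mem_insert _ _)
  | succ n => exact span_pair_pow_succ_of_sq_dvd_sq h n

end Ideal

open Ideal in
theorem stmt5_general (k : Type*) [Field k] (n : ℕ) :
    let x : MvPolynomial (Fin 2) k := MvPolynomial.X 0
    let y : MvPolynomial (Fin 2) k := MvPolynomial.X 1
    (Ideal.span {x, y}) ^ n + Ideal.span {y ^ 2 - x ^ 3} =
      Ideal.span {x ^ n, x ^ (n - 1) * y, y ^ 2 - x ^ 3} := by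
  intro x y
  set J := span {y ^ 2 - x ^ 3}
  have hcusp : Ideal.Quotient.mk J x ^ 2 ∣ Ideal.Quotient.mk J y ^ 2 := by
    refine ⟨Ideal.Quotient.mk J x, ?_⟩
    rw [← pow_succ, ← map_pow, ← map_pow, Ideal.Quotient.eq]
    exact subset_span rfl
  have hrhs : span {x ^ n, x ^ (n - 1) * y, y ^ 2 - x ^ 3} = span {x ^ n, x ^ (n - 1) * y} ⊔ J := by
    simp only [J, span_insert, sup_assoc]
  rw [hrhs, Ideal.add_eq_sup, ← mk_ker (I := J),
    ← map_eq_iff_sup_ker_eq_of_surjective _ Quotient.mk_surjective, Ideal.map_pow]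
  simp only [map_span, Set.image_insert_eq, Set.image_singleton, map_pow, map_mul]
  exact span_pair_pow_of_sq_dvd_sq hcusp n

/-- In `k[x,y]`, for every `n ≥ 2` one has `(x,y)^n + (y^2 - x^3) = (x^n, x^{n-1}y, y^2 - x^3)`. -/
theorem stmt5 (k : Type*) [Field k] (n : ℕ) (hn : 2 ≤ n) :
    let x : MvPolynomial (Fin 2) k := MvPolynomial.X 0
    let y : MvPolynomial (Fin 2) k := MvPolynomial.X 1
    (Ideal.span {x, y}) ^ n + Ideal.span {y ^ 2 - x ^ 3} =
      Ideal.span {x ^ n, x ^ (n - 1) * y, y ^ 2 - x ^ 3} :=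
  stmt5_general k n
end
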